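/- arXiv:1708.03242 — 3 statements merged into one kernel-verified Lean document; each statement's English description precedes it below -/
import Mathlib

section
/- Let s < t, let g : [s,t] → ℝ be continuous and of bounded variation, and let (πⁿ) be a sequence of partitions s = u_0ⁿ < u_1ⁿ < ⋯ < u_{kₙ}ⁿ = t with mesh max_k (u_kⁿ − u_{k−1}ⁿ) → 0. Then the forward Riemann sums Σ_{k=1}^{kₙ} 1_{[g(s),∞)}(g(u_{k−1}ⁿ)) · (g(u_kⁿ) − g(u_{k−1}ⁿ)) converge to (g(t) − g(s))⁺ = max(g(t) − g(s), 0) as n → ∞. -/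
open Filter Set MeasureTheory

namespace SimpleArbAux


lemma step_id (c x y : ℝ) : (if c ≤ x then (1:ℝ) else 0) * (y - x)
    = (max (y - c) 0 - max (x - c) 0)
      - (if c ≤ x then max (-(y - c)) 0 else max (y - c) 0) := by
  rcases le_or_gt c x with h|h <;> rcases le_or_gt c y with h'|h'
  · rw [if_pos h, if_pos h, max_eq_left (by linarith), max_eq_left (by linarith),
      max_eq_right (by linarith)]; ring
  · rw [if_pos h, if_pos h, max_eq_right (by linarith), max_eq_left (by linarith),
      max_eq_left (by linarith)]; ring
  · rw [if_neg h.not_ge, if_neg h.not_ge, max_eq_left (by linarith),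
      max_eq_right (by linarith)]; ring
  · rw [if_neg h.not_ge, if_neg h.not_ge, max_eq_right (by linarith),
      max_eq_right (by linarith)]; ring

lemma err_nonneg (c x y : ℝ) :
    0 ≤ (if c ≤ x then max (-(y - c)) 0 else max (y - c) 0) := by
  split_ifs <;> exact le_max_right _ _

lemma err_le_abs (c x y : ℝ) :
    (if c ≤ x then max (-(y - c)) 0 else max (y - c) 0) ≤ |y - c| := by
  split_ifs
  · exact max_le (neg_le_abs _) (abs_nonneg _)
  · exact max_le (le_abs_self _) (abs_nonneg _)

lemma abs_sub_le_var {f : ℝ → ℝ} {S : Set ℝ} (hbv : BoundedVariationOn f S) {x y : ℝ}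
    (hx : x ∈ S) (hy : y ∈ S) (hxy : x ≤ y) :
    |f y - f x| ≤ variationOnFromTo f S x y := by
  rw [variationOnFromTo.eq_of_le f S hxy]
  have hfin : BoundedVariationOn f (S ∩ Icc x y) := hbv.mono inter_subset_left
  have h1 : edist (f x) (f y) ≤ eVariationOn f (S ∩ Icc x y) :=
    eVariationOn.edist_le f ⟨hx, le_rfl, hxy⟩ ⟨hy, hxy, le_rfl⟩
  have h2 := ENNReal.toReal_mono hfin h1
  rwa [edist_dist, ENNReal.toReal_ofReal dist_nonneg, Real.dist_eq, abs_sub_comm] at h2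



lemma exists_var_right_small {f : ℝ → ℝ} {a b : ℝ}
    (hf : ContinuousOn f (Icc a b)) (hbv : BoundedVariationOn f (Icc a b))
    {x : ℝ} (hx : x ∈ Ico a b) {ε : ℝ} (hε : 0 < ε) :
    ∃ y ∈ Ioc x b, variationOnFromTo f (Icc a b) x y ≤ ε := by
  classical
  by_contra hcon
  push_neg at hcon
  have hxm : x ∈ Icc a b := ⟨hx.1, hx.2.le⟩
  obtain ⟨δ, hδpos, hδ⟩ := Metric.continuousWithinAt_iff.mp (hf x hxm) (ε/2) (by positivity)
  set y₀ := min (x + δ/2) b with hy₀def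
  have hxy₀ : x < y₀ := lt_min (by linarith) hx.2
  have hy₀b : y₀ ≤ b := min_le_right _ _
  have hy₀m : y₀ ∈ Icc a b := ⟨le_trans hxm.1 hxy₀.le, hy₀b⟩
  have hsmall : ∀ p ∈ Icc a b, x ≤ p → p ≤ y₀ → |f p - f x| ≤ ε/2 := by
    intro p hp hxp hpy
    have hd : dist p x < δ := by
      rw [Real.dist_eq, abs_of_nonneg (by linarith)]
      have : p ≤ x + δ/2 := le_trans hpy (min_le_left _ _)
      linarith
    have := le_of_lt (hδ hp hd)
    rwa [Real.dist_eq] at this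
  set S : Set ℝ := Icc a b with hSdef
  have hlbv := hbv.locallyBoundedVariationOn
  have hvy₀ : ε < variationOnFromTo f S x y₀ := hcon y₀ ⟨hxy₀, hy₀b⟩
  set C : ℝ := ε/2 + (variationOnFromTo f S x y₀ - ε) with hC
  have hC0 : 0 ≤ C := by simp only [hC]; linarith
  have hkey : eVariationOn f (S ∩ Icc x y₀) ≤ ENNReal.ofReal C := by
    delta eVariationOn
    refine iSup_le ?_
    rintro ⟨n, ⟨u, hu, us⟩⟩
    dsimp only
    by_cases hall : ∀ i ≤ n, u i = x
    · have hz : ∀ i ∈ Finset.range n, edist (f (u (i+1))) (f (u i)) = 0 := by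
        intro i hi
        rw [Finset.mem_range] at hi
        rw [hall i hi.le, hall (i+1) hi, edist_self]
      rw [Finset.sum_eq_zero hz]
      exact zero_le
    · push_neg at hall
      obtain ⟨i₀, hi₀n, hi₀⟩ := hall
      have hex : ∃ j, x < u j := ⟨i₀, lt_of_le_of_ne (us i₀).2.1 (Ne.symm hi₀)⟩
      set j := Nat.find hex with hjdef
      have hj : x < u j := Nat.find_spec hex
      have hjeq : ∀ i < j, u i = x := fun i hi =>
        le_antisymm (not_lt.mp (Nat.find_min hex hi)) (us i).2.1
      have hjn : j ≤ n := le_trans (Nat.find_min' hex (lt_of_le_of_ne (us i₀).2.1 (Ne.symm hi₀))) hi₀n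
      have hujm : u j ∈ S := (us j).1
      have hujIoc : u j ∈ Ioc x b := ⟨hj, hujm.2⟩
      -- split the sum
      have hsplit : ∑ i ∈ Finset.range n, edist (f (u (i+1))) (f (u i))
          = (∑ i ∈ Finset.range j, edist (f (u (i+1))) (f (u i)))
            + ∑ i ∈ Finset.Ico j n, edist (f (u (i+1))) (f (u i)) := by
        rw [Finset.range_eq_Ico, Finset.range_eq_Ico]
        exact (Finset.sum_Ico_consecutive _ (Nat.zero_le j) hjn).symm
      have h1 : ∑ i ∈ Finset.range j, edist (f (u (i+1))) (f (u i))
          ≤ edist (f (u j)) (f x) := by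
        rcases Nat.eq_zero_or_pos j with h0 | hpos
        · simp [h0]
        · have heq : ∑ i ∈ Finset.range j, edist (f (u (i+1))) (f (u i))
              = edist (f (u j)) (f (u (j-1))) := by
            refine Finset.sum_eq_single_of_mem (j-1) (Finset.mem_range.mpr (by omega)) ?_ |>.trans ?_
            · intro i hi hne
              rw [Finset.mem_range] at hi
              rw [hjeq i hi, hjeq (i+1) (by omega), edist_self]
            · rw [Nat.sub_add_cancel hpos]
          rw [heq, hjeq (j-1) (by omega)]
      have h2 : ∑ i ∈ Finset.Ico j n, edist (f (u (i+1))) (f (u i))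
          ≤ eVariationOn f (S ∩ Icc (u j) y₀) := by
        rw [Finset.sum_Ico_eq_sum_range]
        have := eVariationOn.sum_le (f := f) (s := S ∩ Icc (u j) y₀) (n := n - j) (u := fun i => u (j + i))
          (fun p q hpq => hu (by omega)) (fun i => ⟨(us (j+i)).1, hu (by omega), (us (j+i)).2.2⟩)
        refine le_trans (le_of_eq ?_) this
        refine Finset.sum_congr rfl fun i _ => ?_
        congr 1
      have h3 : edist (f (u j)) (f x) ≤ ENNReal.ofReal (ε/2) := by
        rw [edist_dist, Real.dist_eq]
        exact ENNReal.ofReal_le_ofReal (hsmall (u j) hujm hj.le (us j).2.2)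
      have h4 : eVariationOn f (S ∩ Icc (u j) y₀) ≤ ENNReal.ofReal (variationOnFromTo f S x y₀ - ε) := by
        have hfin : BoundedVariationOn f (S ∩ Icc (u j) y₀) := hbv.mono inter_subset_left
        have heq : eVariationOn f (S ∩ Icc (u j) y₀)
            = ENNReal.ofReal (variationOnFromTo f S (u j) y₀) := by
          rw [variationOnFromTo.eq_of_le f S (us j).2.2, ENNReal.ofReal_toReal hfin]
        rw [heq]
        apply ENNReal.ofReal_le_ofReal
        have hadd := variationOnFromTo.add hlbv hxm hujm hy₀m
        have hx_uj : ε < variationOnFromTo f S x (u j) := hcon (u j) hujIoc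
        linarith
      calc ∑ i ∈ Finset.range n, edist (f (u (i+1))) (f (u i))
          ≤ edist (f (u j)) (f x) + eVariationOn f (S ∩ Icc (u j) y₀) := by
            rw [hsplit]; exact add_le_add h1 h2
        _ ≤ ENNReal.ofReal (ε/2) + ENNReal.ofReal (variationOnFromTo f S x y₀ - ε) :=
            add_le_add h3 h4
        _ = ENNReal.ofReal C := by
            rw [← ENNReal.ofReal_add (by positivity) (by linarith)]
  have hfinal : variationOnFromTo f S x y₀ ≤ C := by
    rw [variationOnFromTo.eq_of_le f S hxy₀.le]
    calc (eVariationOn f (S ∩ Icc x y₀)).toReal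
        ≤ (ENNReal.ofReal C).toReal := ENNReal.toReal_mono ENNReal.ofReal_ne_top hkey
      _ = C := ENNReal.toReal_ofReal hC0
  rw [hC] at hfinal
  linarith



lemma neg_image_inter {c d p q : ℝ} :
    Neg.neg '' (Icc c d ∩ Icc p q) = Icc (-d) (-c) ∩ Icc (-q) (-p) := by
  rw [Set.image_inter neg_injective, Set.image_neg_eq_neg, Set.image_neg_eq_neg,
    Set.neg_Icc, Set.neg_Icc]

lemma exists_var_left_small {f : ℝ → ℝ} {a b : ℝ}
    (hf : ContinuousOn f (Icc a b)) (hbv : BoundedVariationOn f (Icc a b))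
    {x : ℝ} (hx : x ∈ Ioc a b) {ε : ℝ} (hε : 0 < ε) :
    ∃ y ∈ Ico a x, variationOnFromTo f (Icc a b) y x ≤ ε := by
  set F : ℝ → ℝ := fun u => f (-u) with hF
  have hneg_anti : ∀ (t : Set ℝ), AntitoneOn (Neg.neg : ℝ → ℝ) t :=
    fun t p _ q _ hpq => neg_le_neg hpq
  have hvar_eq : ∀ p q : ℝ, eVariationOn F (Icc (-b) (-a) ∩ Icc (-q) (-p))
      = eVariationOn f (Icc a b ∩ Icc p q) := by
    intro p q
    have := eVariationOn.comp_eq_of_antitoneOn f (Neg.neg : ℝ → ℝ)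
      (hneg_anti (Icc (-b) (-a) ∩ Icc (-q) (-p)))
    rw [neg_image_inter] at this
    simp only [neg_neg] at this
    exact this
  have hFc : ContinuousOn F (Icc (-b) (-a)) := by
    apply hf.comp continuous_neg.continuousOn
    intro u hu
    exact ⟨by simpa using neg_le_neg hu.2, by simpa using neg_le_neg hu.1⟩
  have hFbv : BoundedVariationOn F (Icc (-b) (-a)) := by
    unfold BoundedVariationOn
    have : Icc (-b) (-a) = Icc (-b) (-a) ∩ Icc (-b) (-a) := (Set.inter_self _).symm
    rw [this, hvar_eq]
    exact hbv.mono inter_subset_left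
  have hxF : -x ∈ Ico (-b) (-a) := ⟨neg_le_neg hx.2, neg_lt_neg hx.1⟩
  obtain ⟨y', hy', hvar'⟩ := exists_var_right_small hFc hFbv hxF hε
  refine ⟨-y', ⟨le_neg.mpr hy'.2, neg_lt.mp hy'.1⟩, ?_⟩
  have h1 : variationOnFromTo f (Icc a b) (-y') x
      = (eVariationOn f (Icc a b ∩ Icc (-y') x)).toReal := by
    rw [variationOnFromTo.eq_of_le]
    linarith [neg_lt.mp hy'.1]
  have h2 : variationOnFromTo F (Icc (-b) (-a)) (-x) y'
      = (eVariationOn F (Icc (-b) (-a) ∩ Icc (-x) y')).toReal := by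
    rw [variationOnFromTo.eq_of_le]
    linarith [hy'.1]
  rw [h1]
  have := hvar_eq (-y') x
  rw [show -(-y' : ℝ) = y' by ring] at this
  rw [← this, ← h2]
  exact hvar'

lemma var_continuousOn {f : ℝ → ℝ} {a b : ℝ} (hab : a ≤ b)
    (hf : ContinuousOn f (Icc a b)) (hbv : BoundedVariationOn f (Icc a b)) :
    ContinuousOn (fun x => variationOnFromTo f (Icc a b) a x) (Icc a b) := by
  have hlbv := hbv.locallyBoundedVariationOn
  have haS : a ∈ Icc a b := left_mem_Icc.mpr hab
  intro x hx
  rw [Metric.continuousWithinAt_iff]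
  intro ε hε
  -- right control
  obtain ⟨δ₁, hδ₁pos, hδ₁⟩ : ∃ δ₁ > 0, ∀ y ∈ Icc a b, x ≤ y → y - x < δ₁ →
      variationOnFromTo f (Icc a b) x y < ε := by
    rcases eq_or_lt_of_le hx.2 with rfl|hxb
    · refine ⟨1, one_pos, fun y hy hxy _ => ?_⟩
      have : y = x := le_antisymm hy.2 hxy
      rw [this, variationOnFromTo.self]
      exact hε
    · obtain ⟨y₁, hy₁, hvy₁⟩ := exists_var_right_small hf hbv ⟨hx.1, hxb⟩ (half_pos hε)
      refine ⟨y₁ - x, by linarith [hy₁.1], fun y hy hxy hlt => ?_⟩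
      have hyy₁ : y ≤ y₁ := by linarith
      have hmono := variationOnFromTo.monotoneOn hlbv hx
      have : variationOnFromTo f (Icc a b) x y ≤ variationOnFromTo f (Icc a b) x y₁ :=
        hmono hy ⟨le_trans hx.1 (le_trans hxy hyy₁), hy₁.2⟩ hyy₁
      linarith
  -- left control
  obtain ⟨δ₂, hδ₂pos, hδ₂⟩ : ∃ δ₂ > 0, ∀ y ∈ Icc a b, y ≤ x → x - y < δ₂ →
      variationOnFromTo f (Icc a b) y x < ε := by
    rcases eq_or_lt_of_le hx.1 with heq|hax
    · refine ⟨1, one_pos, fun y hy hxy _ => ?_⟩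
      have : y = x := le_antisymm hxy (heq ▸ hy.1)
      rw [this, variationOnFromTo.self]
      exact hε
    · obtain ⟨y₂, hy₂, hvy₂⟩ := exists_var_left_small hf hbv ⟨hax, hx.2⟩ (half_pos hε)
      refine ⟨x - y₂, by linarith [hy₂.2], fun y hy hxy hlt => ?_⟩
      have hy₂y : y₂ ≤ y := by linarith
      have hanti := variationOnFromTo.antitoneOn hlbv hx
      have : variationOnFromTo f (Icc a b) y x ≤ variationOnFromTo f (Icc a b) y₂ x :=
        hanti ⟨hy₂.1, le_trans hy₂y (le_trans hxy hx.2)⟩ hy hy₂y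
      linarith
  refine ⟨min δ₁ δ₂, lt_min hδ₁pos hδ₂pos, fun y hy hd => ?_⟩
  rw [Real.dist_eq] at hd
  rw [Real.dist_eq]
  have hadd := variationOnFromTo.add hlbv haS hx hy
  rcases le_total x y with hxy|hyx
  · have h1 : variationOnFromTo f (Icc a b) x y < ε := by
      apply hδ₁ y hy hxy
      have h5 := abs_lt.mp hd
      have h6 := min_le_left δ₁ δ₂
      linarith [h5.1, h5.2]
    have h0 : 0 ≤ variationOnFromTo f (Icc a b) x y := variationOnFromTo.nonneg_of_le f _ hxy
    rw [abs_of_nonneg (by linarith)]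
    linarith
  · have hadd2 := variationOnFromTo.add hlbv haS hy hx
    have h1 : variationOnFromTo f (Icc a b) y x < ε := by
      apply hδ₂ y hy hyx
      have h5 := abs_lt.mp hd
      have h6 := min_le_right δ₁ δ₂
      linarith [h5.1, h5.2]
    have h0 : 0 ≤ variationOnFromTo f (Icc a b) y x := variationOnFromTo.nonneg_of_le f _ hyx
    rw [abs_of_nonpos (by linarith)]
    linarith

end SimpleArbAux

open SimpleArbAux

/-- Pathwise identity behind the simple-arbitrage remark: for a continuous bounded-variation
function `g` on `[s,t]` and any sequence of partitions with vanishing mesh, the forward Riemann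
sums `Σ_k 1_{[g(s),∞)}(g(u_{k-1})) (g(u_k) − g(u_{k-1}))` converge to `(g(t) − g(s))⁺`. -/
theorem stmt_5
    (s t : ℝ) (hst : s < t) (g : ℝ → ℝ)
    (hg_cont : ContinuousOn g (Set.Icc s t))
    (hg_bv : BoundedVariationOn g (Set.Icc s t))
    (N : ℕ → ℕ) (π : (n : ℕ) → Fin (N n + 1) → ℝ)
    (hπ_mono : ∀ n, StrictMono (π n))
    (hπ0 : ∀ n, π n 0 = s)
    (hπ_last : ∀ n, π n (Fin.last (N n)) = t)
    (hmesh : ∀ ε > 0, ∃ n₀ : ℕ, ∀ n ≥ n₀, ∀ k : Fin (N n),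
      π n k.succ - π n k.castSucc < ε) :
    Tendsto
      (fun n => ∑ k : Fin (N n),
        (if g s ≤ g (π n k.castSucc) then (1 : ℝ) else 0)
          * (g (π n k.succ) - g (π n k.castSucc)))
      atTop (nhds (max (g t - g s) 0)) := by
  classical
  have hst' : s ≤ t := hst.le
  have hlbv := hg_bv.locallyBoundedVariationOn
  set S : Set ℝ := Set.Icc s t with hSdef
  set V : ℝ → ℝ := fun x => variationOnFromTo g S s x with hVdef
  have hsS : s ∈ S := Set.left_mem_Icc.mpr hst'
  have htS : t ∈ S := Set.right_mem_Icc.mpr hst'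
  have hVmono : MonotoneOn V S := variationOnFromTo.monotoneOn hlbv hsS
  have hVcont : ContinuousOn V S := var_continuousOn hst' hg_cont hg_bv
  have hmemS : ∀ n (i : Fin (N n + 1)), π n i ∈ S := by
    intro n i
    constructor
    · rw [← hπ0 n]; exact (hπ_mono n).monotone (Fin.zero_le i)
    · rw [← hπ_last n]; exact (hπ_mono n).monotone (Fin.le_last i)
  set Z : Set ℝ := {u | u ∈ S ∧ g u = g s} with hZdef
  have hZclosed : IsClosed Z := by
    have h : Z = S ∩ g ⁻¹' {g s} := by ext u; simp [hZdef, Set.mem_inter_iff]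
    rw [h]
    exact hg_cont.preimage_isClosed_of_isClosed isClosed_Icc isClosed_singleton
  have hZcpt : IsCompact Z := isCompact_Icc.of_isClosed_subset hZclosed (fun u hu => hu.1)
  set E : Set ℝ := V '' Z with hEdef
  have hEcpt : IsCompact E := hZcpt.image_of_continuousOn (hVcont.mono (fun u hu => hu.1))
  have hEmeas : MeasurableSet E := hEcpt.isClosed.measurableSet
  have hEfin : volume E ≠ ⊤ := hEcpt.measure_lt_top.ne
  rw [Metric.tendsto_atTop]
  intro ε hε
  have htends := tendsto_measure_cthickening_of_isCompact (μ := volume) hEcpt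
  have hlt : volume E < volume E + ENNReal.ofReal (ε/2) :=
    ENNReal.lt_add_right hEfin (by simp [ENNReal.ofReal_eq_zero]; linarith)
  have hev : ∀ᶠ r in nhds (0:ℝ),
      volume (Metric.cthickening r E) < volume E + ENNReal.ofReal (ε/2) :=
    htends.eventually_lt_const hlt
  obtain ⟨r₀, hr₀pos, hr₀⟩ := Metric.eventually_nhds_iff_ball.mp hev
  set ρ : ℝ := r₀/2 with hρdef
  have hρpos : 0 < ρ := by positivity
  have hcth : volume (Metric.cthickening ρ E) < volume E + ENNReal.ofReal (ε/2) := by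
    apply hr₀
    simp only [Metric.mem_ball, Real.dist_eq, sub_zero]
    rw [abs_of_pos hρpos]
    simp only [hρdef]; linarith
  have hVuc := (isCompact_Icc (a := s) (b := t)).uniformContinuousOn_of_continuous hVcont
  rw [Metric.uniformContinuousOn_iff] at hVuc
  obtain ⟨δ, hδpos, hδ⟩ := hVuc ρ hρpos
  obtain ⟨n₀, hn₀⟩ := hmesh δ hδpos
  refine ⟨n₀, fun n hn => ?_⟩
  -- abbreviations for this n
  set uL : Fin (N n) → ℝ := fun k => π n k.castSucc with huLdef
  set uR : Fin (N n) → ℝ := fun k => π n k.succ with huRdef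
  have hmesh_n : ∀ k, uR k - uL k < δ := hn₀ n hn
  have huLR : ∀ k, uL k < uR k := fun k => hπ_mono n (Fin.castSucc_lt_succ (i := k))
  have huLS : ∀ k, uL k ∈ S := fun k => hmemS n _
  have huRS : ∀ k, uR k ∈ S := fun k => hmemS n _
  have hIccSub : ∀ k, Set.Icc (uL k) (uR k) ⊆ S :=
    fun k u hu => ⟨le_trans (huLS k).1 hu.1, le_trans hu.2 (huRS k).2⟩
  set Zk : Fin (N n) → Set ℝ := fun k => {u | u ∈ Set.Icc (uL k) (uR k) ∧ g u = g s} with hZkdef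
  set zk : Fin (N n) → ℝ := fun k => if h : (Zk k).Nonempty then sSup (Zk k) else uR k with hzkdef
  have hZkclosed : ∀ k, IsClosed (Zk k) := by
    intro k
    have h : Zk k = Set.Icc (uL k) (uR k) ∩ g ⁻¹' {g s} := by
      ext u; simp [hZkdef, Set.mem_inter_iff]
    rw [h]
    exact (hg_cont.mono (hIccSub k)).preimage_isClosed_of_isClosed isClosed_Icc isClosed_singleton
  have hZkbdd : ∀ k, BddAbove (Zk k) := fun k => ⟨uR k, fun z hz => hz.1.2⟩
  have hzk_spec : ∀ k, (Zk k).Nonempty → zk k ∈ Zk k := by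
    intro k h
    simp only [hzkdef, dif_pos h]
    exact (hZkclosed k).csSup_mem h (hZkbdd k)
  have hzk_mem : ∀ k, zk k ∈ Set.Icc (uL k) (uR k) := by
    intro k
    by_cases h : (Zk k).Nonempty
    · exact (hzk_spec k h).1
    · simp only [hzkdef, dif_neg h]
      exact ⟨(huLR k).le, le_rfl⟩
  have hzk_S : ∀ k, zk k ∈ S := fun k => hIccSub k (hzk_mem k)
  have hzk_ub : ∀ k z, z ∈ Zk k → z ≤ zk k := by
    intro k z hz
    have h : (Zk k).Nonempty := ⟨z, hz⟩
    simp only [hzkdef, dif_pos h]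
    exact le_csSup (hZkbdd k) hz
  set I : Fin (N n) → Set ℝ := fun k => Set.Ioo (V (zk k)) (V (uR k)) with hIdef
  set errt : Fin (N n) → ℝ := fun k =>
    if g s ≤ g (uL k) then max (-(g (uR k) - g s)) 0 else max (g (uR k) - g s) 0 with herrdef
  have herr_nonneg : ∀ k, 0 ≤ errt k := fun k => err_nonneg _ _ _
  -- sum identity
  have htel : ∑ k : Fin (N n), (max (g (uR k) - g s) 0 - max (g (uL k) - g s) 0)
      = max (g t - g s) 0 := by
    set G : ℕ → ℝ := fun i => max (g (π n ⟨min i (N n), by omega⟩) - g s) 0 with hGdef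
    have hconv : ∀ k : Fin (N n),
        (max (g (uR k) - g s) 0 - max (g (uL k) - g s) 0) = G (k.1 + 1) - G k.1 := by
      intro k
      have h1 : (⟨min (k.1+1) (N n), by omega⟩ : Fin (N n + 1)) = k.succ := by
        apply Fin.ext
        simp [Nat.min_eq_left (Nat.succ_le_of_lt k.isLt)]
      have h2 : (⟨min k.1 (N n), by omega⟩ : Fin (N n + 1)) = k.castSucc := by
        apply Fin.ext
        simp [Nat.min_eq_left (le_of_lt k.isLt)]
      simp only [hGdef, h1, h2, huLdef, huRdef]
    rw [Finset.sum_congr rfl (fun k _ => hconv k)]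
    rw [Fin.sum_univ_eq_sum_range (fun i => G (i+1) - G i) (N n)]
    rw [Finset.sum_range_sub G]
    have hlast : G (N n) = max (g t - g s) 0 := by
      have h : (⟨min (N n) (N n), by omega⟩ : Fin (N n + 1)) = Fin.last (N n) := by
        apply Fin.ext; simp [Fin.last]
      simp only [hGdef, h, hπ_last n]
    have h0 : G 0 = 0 := by
      have h : (⟨min 0 (N n), by omega⟩ : Fin (N n + 1)) = 0 := by
        apply Fin.ext; simp
      simp [hGdef, h, hπ0 n]
    rw [hlast, h0, sub_zero]
  have hSn : (∑ k : Fin (N n),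
        (if g s ≤ g (π n k.castSucc) then (1 : ℝ) else 0)
          * (g (π n k.succ) - g (π n k.castSucc)))
      = max (g t - g s) 0 - ∑ k : Fin (N n), errt k := by
    have h1 : ∀ k : Fin (N n),
        (if g s ≤ g (π n k.castSucc) then (1 : ℝ) else 0) * (g (π n k.succ) - g (π n k.castSucc))
        = (max (g (uR k) - g s) 0 - max (g (uL k) - g s) 0) - errt k := by
      intro k
      simp only [herrdef, huLdef, huRdef]
      exact step_id (g s) (g (π n k.castSucc)) (g (π n k.succ))
    rw [Finset.sum_congr rfl (fun k _ => h1 k), Finset.sum_sub_distrib, htel]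
  -- error estimate
  have hZk_ne_of_err : ∀ k, 0 < errt k → (Zk k).Nonempty := by
    intro k hk
    simp only [herrdef] at hk
    by_cases h : g s ≤ g (uL k)
    · rw [if_pos h] at hk
      have hneg : g (uR k) < g s := by
        by_contra hc; push_neg at hc
        rw [max_eq_right (by linarith)] at hk; linarith
      obtain ⟨z, hz, hgz⟩ := intermediate_value_Icc' (huLR k).le (hg_cont.mono (hIccSub k))
        (Set.mem_Icc.mpr ⟨hneg.le, h⟩)
      exact ⟨z, hz, hgz⟩
    · rw [if_neg h] at hk
      push_neg at h
      have hpos : g s < g (uR k) := by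
        by_contra hc; push_neg at hc
        rw [max_eq_right (by linarith)] at hk; linarith
      obtain ⟨z, hz, hgz⟩ := intermediate_value_Icc (huLR k).le (hg_cont.mono (hIccSub k))
        (Set.mem_Icc.mpr ⟨h.le, hpos.le⟩)
      exact ⟨z, hz, hgz⟩
  have hvolI : ∀ k, volume (I k) = ENNReal.ofReal (V (uR k) - V (zk k)) := by
    intro k; simp only [hIdef]; exact Real.volume_Ioo
  have hVz_le : ∀ k, V (zk k) ≤ V (uR k) := fun k => hVmono (hzk_S k) (huRS k) (hzk_mem k).2
  have hi : ∀ k, errt k ≤ (volume (I k)).toReal := by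
    intro k
    rw [hvolI k, ENNReal.toReal_ofReal (by linarith [hVz_le k])]
    rcases lt_or_ge 0 (errt k) with hk | hk
    · have hne := hZk_ne_of_err k hk
      have hgz : g (zk k) = g s := (hzk_spec k hne).2
      have h1 : errt k ≤ |g (uR k) - g s| := err_le_abs _ _ _
      have h2 : |g (uR k) - g (zk k)| ≤ variationOnFromTo g S (zk k) (uR k) :=
        abs_sub_le_var hg_bv (hzk_S k) (huRS k) (hzk_mem k).2
      have h3 : variationOnFromTo g S (zk k) (uR k) = V (uR k) - V (zk k) := by
        have h4 := variationOnFromTo.add hlbv hsS (hzk_S k) (huRS k)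
        simp only [hVdef]
        linarith
      rw [hgz] at h2
      linarith
    · linarith [herr_nonneg k, hVz_le k]
  have hIsub : ∀ k, I k ⊆ Metric.cthickening ρ E := by
    intro k y hy
    have hne : (Zk k).Nonempty := by
      by_contra h
      have hzz : zk k = uR k := by simp only [hzkdef, dif_neg h]
      simp only [hIdef, hzz] at hy
      exact absurd hy (by simp)
    have hgz : g (zk k) = g s := (hzk_spec k hne).2
    have hVzE : V (zk k) ∈ E := ⟨zk k, ⟨hzk_S k, hgz⟩, rfl⟩
    apply Metric.mem_cthickening_of_dist_le y (V (zk k)) ρ E hVzE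
    have hd1 : dist (uR k) (zk k) < δ := by
      rw [Real.dist_eq, abs_of_nonneg (by linarith [(hzk_mem k).2])]
      linarith [(hzk_mem k).1, hmesh_n k]
    have hd2 : dist (V (uR k)) (V (zk k)) < ρ := hδ (uR k) (huRS k) (zk k) (hzk_S k) hd1
    rw [Real.dist_eq, abs_of_nonneg (by linarith [hVz_le k])] at hd2
    simp only [hIdef, Set.mem_Ioo] at hy
    rw [Real.dist_eq, abs_of_nonneg (by linarith [hy.1])]
    linarith [hy.2]
  have hIdisjE : ∀ k, Disjoint (I k) E := by
    intro k
    rw [Set.disjoint_left]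
    rintro y hyI ⟨z', hz', rfl⟩
    simp only [hIdef, Set.mem_Ioo] at hyI
    rcases le_or_gt z' (zk k) with h1 | h1
    · exact absurd (hVmono hz'.1 (hzk_S k) h1) (not_le.mpr hyI.1)
    rcases le_or_gt (uR k) z' with h2 | h2
    · exact absurd (hVmono (huRS k) hz'.1 h2) (not_le.mpr hyI.2)
    · have hmem : z' ∈ Zk k := ⟨⟨le_trans (hzk_mem k).1 h1.le, h2.le⟩, hz'.2⟩
      exact absurd (hzk_ub k z' hmem) (not_le.mpr h1)
  have hIIoc : ∀ k, I k ⊆ Set.Ioc (V (uL k)) (V (uR k)) := by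
    intro k y hy
    simp only [hIdef, Set.mem_Ioo] at hy
    exact ⟨lt_of_le_of_lt (hVmono (huLS k) (hzk_S k) (hzk_mem k).1) hy.1, hy.2.le⟩
  have hpair : Set.PairwiseDisjoint (↑(Finset.univ : Finset (Fin (N n)))) I := by
    have key : ∀ p q : Fin (N n), p < q → Disjoint (I p) (I q) := by
      intro p q hpq
      have hle : V (uR p) ≤ V (uL q) := by
        apply hVmono (huRS p) (huLS q)
        simp only [huRdef, huLdef]
        exact (hπ_mono n).monotone (by
          rw [Fin.le_def]
          simp only [Fin.val_succ, Fin.coe_castSucc]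
          omega)
      apply Set.disjoint_of_subset (hIIoc p) (hIIoc q)
      rw [Set.disjoint_left]
      intro y hy1 hy2
      exact absurd hy2.1 (not_lt.mpr (le_trans hy1.2 hle))
    intro p _ q _ hpq
    rcases lt_or_gt_of_ne hpq with h|h
    · exact key _ _ h
    · exact (key _ _ h).symm
  set A := volume (⋃ k ∈ (Finset.univ : Finset (Fin (N n))), I k) with hAdef
  have hAsum : A = ∑ k : Fin (N n), volume (I k) :=
    measure_biUnion_finset hpair (fun k _ => measurableSet_Ioo)
  have hsub : (⋃ k ∈ (Finset.univ : Finset (Fin (N n))), I k) ∪ E ⊆ Metric.cthickening ρ E := by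
    apply Set.union_subset
    · exact Set.iUnion₂_subset fun k _ => hIsub k
    · exact Metric.self_subset_cthickening _
  have hdisjUE : Disjoint (⋃ k ∈ (Finset.univ : Finset (Fin (N n))), I k) E := by
    rw [Set.disjoint_left]
    intro y hy hyE
    simp only [Set.mem_iUnion] at hy
    obtain ⟨k, _, hk⟩ := hy
    exact (Set.disjoint_left.mp (hIdisjE k)) hk hyE
  have hUB : A + volume E ≤ volume (Metric.cthickening ρ E) := by
    rw [hAdef, ← measure_union hdisjUE hEmeas]
    exact measure_mono hsub
  have hAlt : A < ENNReal.ofReal (ε/2) := by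
    have h1 : volume E + A < volume E + ENNReal.ofReal (ε/2) := by
      rw [add_comm (volume E) A]
      exact lt_of_le_of_lt hUB hcth
    exact (ENNReal.add_lt_add_iff_left hEfin).mp h1
  have hsum_err : ∑ k : Fin (N n), errt k < ε := by
    have h1 : ∑ k : Fin (N n), errt k ≤ ∑ k : Fin (N n), (volume (I k)).toReal :=
      Finset.sum_le_sum (fun k _ => hi k)
    have h2 : ∑ k : Fin (N n), (volume (I k)).toReal = A.toReal := by
      rw [hAsum, ENNReal.toReal_sum (fun k _ => by rw [hvolI k]; exact ENNReal.ofReal_ne_top)]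
    have h3 : A.toReal < ε/2 := ENNReal.toReal_lt_of_lt_ofReal hAlt
    linarith
  rw [hSn, Real.dist_eq]
  have hnn : 0 ≤ ∑ k : Fin (N n), errt k := Finset.sum_nonneg (fun k _ => herr_nonneg k)
  rw [show max (g t - g s) 0 - (∑ k : Fin (N n), errt k) - max (g t - g s) 0
      = -(∑ k : Fin (N n), errt k) by ring, abs_neg, abs_of_nonneg hnn]
  exact hsum_err
end

section
/- Let T > 0 and let x : [0,T] → ℝ be continuous. Let (πⁿ) be a sequence of partitions 0 = t_0ⁿ < ⋯ < t_{kₙ}ⁿ = T with mesh tending to 0, and suppose there is a continuous nondecreasing function q : [0,T] → ℝ with q(0) = 0 such that for every t ∈ [0,T], Σ_{t_kⁿ ≤ t} (x(t_kⁿ) − x(t_{k−1}ⁿ))² → q(t). Let h : [0,T] → ℝ be continuous and of bounded variation, let s_0 > 0, and define s(t) = s_0 · exp(h(t) + x(t)). Then for every t ∈ [0,T], Σ_{t_kⁿ ≤ t} (s(t_kⁿ) − s(t_{k−1}ⁿ))² → ∫_{(0,t]} s(u)² dq(u), where dq is the Lebesgue–Stieltjes measure of q. -/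
open MeasureTheory Filter

lemma exp_est {y z : ℝ} (hy : |y| ≤ 1) :
    |(Real.exp y - 1)^2 - z^2| ≤ 3*|y| *y^2 + |y - z| *(|y|+|z|) := by
  have h2 := Real.abs_exp_sub_one_sub_id_le hy
  have h3 := Real.abs_exp_sub_one_le hy
  have e1 : (Real.exp y - 1)^2 - y^2 = (Real.exp y - 1 - y)*(Real.exp y - 1 + y) := by ring
  have e2 : |(Real.exp y - 1)^2 - y^2| ≤ y^2 * (3*|y|) := by
    rw [e1, abs_mul]
    apply mul_le_mul h2 _ (abs_nonneg _) (sq_nonneg _)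
    calc |Real.exp y - 1 + y| ≤ |Real.exp y - 1| + |y| := abs_add_le _ _
      _ ≤ 2*|y| + |y| := by linarith
      _ = 3*|y| := by ring
  have e3 : |y^2 - z^2| ≤ |y - z| *(|y|+|z|) := by
    have : y^2 - z^2 = (y-z)*(y+z) := by ring
    rw [this, abs_mul]
    exact mul_le_mul_of_nonneg_left (abs_add_le _ _) (abs_nonneg _)
  calc |(Real.exp y - 1)^2 - z^2|
      ≤ |(Real.exp y - 1)^2 - y^2| + |y^2 - z^2| := abs_sub_le _ _ _
    _ ≤ 3*|y| *y^2 + |y - z| *(|y|+|z|) := by nlinarith [e2, e3]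

lemma core_est {y z w η : ℝ} (hη : η ≤ 1/2) (hη0 : 0 ≤ η) (hw : |w| ≤ η) (hz : |z| ≤ η)
    (hy : y = w + z) : |(Real.exp y - 1)^2 - z^2| ≤ 15*η*|w| + 12*η*z^2 := by
  have hyb : |y| ≤ 2*η := by
    rw [hy]; calc |w + z| ≤ |w| + |z| := abs_add_le _ _
      _ ≤ 2*η := by linarith
  have h1 : |y| ≤ 1 := by linarith
  have := exp_est (z := z) h1
  have hwz : y - z = w := by rw [hy]; ring
  rw [hwz] at this
  have hy2 : y^2 ≤ 2*w^2 + 2*z^2 := by rw [hy]; nlinarith [sq_nonneg (w - z)]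
  have hw2 : w^2 ≤ η*|w| := by nlinarith [abs_nonneg w, sq_abs w]
  have h3 : 3*|y| *y^2 ≤ 6*η*(2*η*|w| + 2*z^2) := by
    have h0 : 0 ≤ y^2 := sq_nonneg _
    have : 3*|y| *y^2 ≤ 3*(2*η)*y^2 := by nlinarith
    nlinarith
  have h4 : |w| *(|y|+|z|) ≤ 3*η*|w| := by
    have := abs_nonneg w
    nlinarith
  nlinarith [abs_nonneg w, sq_nonneg z]

lemma var_sum {h : ℝ → ℝ} {T : ℝ} (hh_bv : BoundedVariationOn h (Set.Icc 0 T))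
    {K : ℕ} (τ : Fin (K+1) → ℝ) (hmono : Monotone τ) (hτ : ∀ k, τ k ∈ Set.Icc 0 T) :
    ∑ k : Fin K, |h (τ k.succ) - h (τ k.castSucc)| ≤ (eVariationOn h (Set.Icc 0 T)).toReal := by
  set u : ℕ → ℝ := fun i => τ ⟨min i K, by omega⟩ with hu
  have humono : Monotone u := by
    intro i j hij
    exact hmono (by simp [Fin.le_def]; omega)
  have hus : ∀ i, u i ∈ Set.Icc 0 T := fun i => hτ _
  have key := eVariationOn.sum_le (f := h) (n := K) humono hus
  have heq : ∀ k : Fin K, |h (τ k.succ) - h (τ k.castSucc)| = |h (u (k.1+1)) - h (u k.1)| := by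
    intro k
    have h1 : u (k.1+1) = τ k.succ := by
      simp only [hu]; congr 1; ext; simp [Nat.min_eq_left (Nat.succ_le_of_lt k.2)]
    have h2 : u k.1 = τ k.castSucc := by
      simp only [hu]; congr 1; ext; simp [Nat.min_eq_left (le_of_lt k.2)]
    rw [h1, h2]
  have hsum : ∑ k : Fin K, |h (τ k.succ) - h (τ k.castSucc)|
      = ∑ i ∈ Finset.range K, |h (u (i+1)) - h (u i)| := by
    rw [Finset.sum_congr rfl (fun k _ => heq k)]
    exact Fin.sum_univ_eq_sum_range (fun i => |h (u (i+1)) - h (u i)|) K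
  rw [hsum]
  have hof : ENNReal.ofReal (∑ i ∈ Finset.range K, |h (u (i+1)) - h (u i)|)
      ≤ eVariationOn h (Set.Icc 0 T) := by
    rw [ENNReal.ofReal_sum_of_nonneg (fun i _ => abs_nonneg _)]
    refine le_trans (le_of_eq ?_) key
    apply Finset.sum_congr rfl
    intro i _
    rw [edist_dist, Real.dist_eq]
  calc ∑ i ∈ Finset.range K, |h (u (i+1)) - h (u i)|
      = (ENNReal.ofReal (∑ i ∈ Finset.range K, |h (u (i+1)) - h (u i)|)).toReal := by
        rw [ENNReal.toReal_ofReal (Finset.sum_nonneg (fun i _ => abs_nonneg _))]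
    _ ≤ _ := ENNReal.toReal_mono hh_bv hof

set_option maxHeartbeats 2000000 in
lemma main_aux
    (T t : ℝ) (ht0 : 0 < t) (htT : t ≤ T)
    (x : ℝ → ℝ)
    (N : ℕ → ℕ) (π : (n : ℕ) → Fin (N n + 1) → ℝ)
    (hπ_mono : ∀ n, StrictMono (π n))
    (hπ0 : ∀ n, π n 0 = 0)
    (hπ_last : ∀ n, π n (Fin.last (N n)) = T)
    (hmesh : ∀ ε > 0, ∃ n₀ : ℕ, ∀ n ≥ n₀, ∀ k : Fin (N n),
      π n k.succ - π n k.castSucc < ε)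
    (q : ℝ → ℝ) (hq_mono : Monotone q) (hq_cont : Continuous q) (hq0 : q 0 = 0)
    (ν : Measure ℝ)
    (hν : ν = StieltjesFunction.measure
      ⟨q, hq_mono, fun y => hq_cont.continuousAt.continuousWithinAt⟩)
    (hqv : ∀ r ∈ Set.Icc (0:ℝ) T,
      Tendsto
        (fun n => ∑ k : Fin (N n),
          if π n k.succ ≤ r then (x (π n k.succ) - x (π n k.castSucc)) ^ 2 else 0)
        atTop (nhds (q r)))
    (f : ℝ → ℝ) (hf : ContinuousOn f (Set.Icc 0 T)) :
    Tendsto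
      (fun n => ∑ k : Fin (N n),
        if π n k.succ ≤ t then f (π n k.castSucc) * (x (π n k.succ) - x (π n k.castSucc)) ^ 2 else 0)
      atTop (nhds (∫ u in Set.Ioc 0 t, f u ∂ν)) := by
  have hqT0 : (0:ℝ) ≤ q T := by
    rw [← hq0]; exact hq_mono (le_trans ht0.le htT)
  have hqt0 : (0:ℝ) ≤ q t := by rw [← hq0]; exact hq_mono ht0.le
  have hqtT : q t ≤ q T := hq_mono htT
  have hmem : ∀ n (k : Fin (N n + 1)), π n k ∈ Set.Icc (0:ℝ) T := fun n k =>
    ⟨(hπ0 n) ▸ (hπ_mono n).monotone (Fin.zero_le k),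
     (hπ_last n) ▸ (hπ_mono n).monotone (Fin.le_last k)⟩
  have hνIoc : ∀ a b : ℝ, a ≤ b → (ν (Set.Ioc a b)).toReal = q b - q a := by
    intro a b hab
    rw [hν, StieltjesFunction.measure_Ioc,
      ENNReal.toReal_ofReal (sub_nonneg.2 (hq_mono hab))]
  have hνfin : ∀ a b : ℝ, ν (Set.Ioc a b) < ⊤ := by
    intro a b
    rw [hν, StieltjesFunction.measure_Ioc]
    exact ENNReal.ofReal_lt_top
  have hInt : ∀ a b : ℝ, 0 ≤ a → b ≤ T → IntegrableOn f (Set.Ioc a b) ν := by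
    intro a b ha hb
    have hsub : Set.Ioc a b ⊆ Set.Icc 0 T := fun v hv =>
      ⟨le_trans ha hv.1.le, le_trans hv.2 hb⟩
    have hbig : IntegrableOn f (Set.Icc 0 T) ν := by
      have : IsFiniteMeasureOnCompacts ν := by
        rw [hν]; infer_instance
      exact hf.integrableOn_compact isCompact_Icc
    exact hbig.mono_set hsub
  rw [Metric.tendsto_nhds]
  intro ε hε
  set ε' : ℝ := ε / (2 * (2 * q T + 2)) with hε'def
  have hε' : 0 < ε' := by positivity
  obtain ⟨δ, hδ0, hδ⟩ := Metric.uniformContinuousOn_iff.1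
    (isCompact_Icc.uniformContinuousOn_of_continuous hf) ε' hε'
  obtain ⟨m, hm⟩ := exists_nat_gt (2 * t / δ)
  have hm0 : (0:ℝ) < m := lt_trans (by positivity) hm
  set g : ℕ → ℝ := fun j => j * t / m with hgdef
  have hg0 : g 0 = 0 := by simp [hgdef]
  have hgm : g m = t := by
    simp only [hgdef]; field_simp
  have hgstep : ∀ j : ℕ, g (j+1) = g j + t / m := by
    intro j; simp only [hgdef]; push_cast; ring
  have hstepδ : t / m < δ / 2 := by
    rw [div_lt_iff₀ hm0]
    rw [div_lt_iff₀ hδ0] at hm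
    nlinarith
  have hgmono : Monotone g := by
    intro i j hij
    simp only [hgdef]
    gcongr
  have hgT : ∀ j, j ≤ m → g j ∈ Set.Icc (0:ℝ) T := by
    intro j hj
    constructor
    · simp only [hgdef]; positivity
    · calc g j ≤ g m := hgmono hj
        _ = t := hgm
        _ ≤ T := htT
  set Q : ℕ → ℝ → ℝ := fun n r => ∑ k : Fin (N n),
    if π n k.succ ≤ r then (x (π n k.succ) - x (π n k.castSucc)) ^ 2 else 0 with hQdef
  set B : ℝ := ∑ j ∈ Finset.range m, f (g j) * (q (g (j+1)) - q (g j)) with hBdef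
  -- step (c) : |B - ∫| ≤ ε' * q t
  have hsplit : ∀ j, j ≤ m → ∫ v in Set.Ioc 0 (g j), f v ∂ν
      = ∑ i ∈ Finset.range j, ∫ v in Set.Ioc (g i) (g (i+1)), f v ∂ν := by
    intro j hj
    induction j with
    | zero => simp [hg0]
    | succ i ih =>
      rw [Finset.sum_range_succ, ← ih (le_trans (Nat.le_succ i) hj)]
      have h0i : (0:ℝ) ≤ g i := (hgT i (le_trans (Nat.le_succ i) hj)).1
      have hii : g i ≤ g (i+1) := hgmono (Nat.le_succ i)
      rw [← MeasureTheory.setIntegral_union (Set.Ioc_disjoint_Ioc_of_le le_rfl) measurableSet_Ioc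
        (hInt 0 (g i) le_rfl (hgT i (le_trans (Nat.le_succ i) hj)).2)
        (hInt (g i) (g (i+1)) h0i (hgT (i+1) hj).2),
        Set.Ioc_union_Ioc_eq_Ioc h0i hii]
  have hper : ∀ j, j < m →
      |f (g j) * (q (g (j+1)) - q (g j)) - ∫ v in Set.Ioc (g j) (g (j+1)), f v ∂ν|
        ≤ ε' * (q (g (j+1)) - q (g j)) := by
    intro j hj
    have hjm : j ≤ m := hj.le
    have hj1m : j + 1 ≤ m := hj
    have h0j : (0:ℝ) ≤ g j := (hgT j hjm).1
    have hjj : g j ≤ g (j+1) := hgmono (Nat.le_succ j)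
    have hconst : f (g j) * (q (g (j+1)) - q (g j))
        = ∫ _ in Set.Ioc (g j) (g (j+1)), f (g j) ∂ν := by
      rw [MeasureTheory.setIntegral_const, measureReal_def, hνIoc _ _ hjj, smul_eq_mul, mul_comm]
    rw [hconst, ← MeasureTheory.integral_sub
      ((integrableOn_const (C := f (g j)) (hνfin _ _).ne))
      (hInt (g j) (g (j+1)) h0j (hgT (j+1) hj1m).2)]
    have hIsub : IntegrableOn (fun v => f (g j) - f v) (Set.Ioc (g j) (g (j+1))) ν :=
      (integrableOn_const (hνfin _ _).ne).sub
        (hInt (g j) (g (j+1)) h0j (hgT (j+1) hj1m).2)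
    have := MeasureTheory.norm_setIntegral_le_of_norm_le_const (μ := ν)
      (s := Set.Ioc (g j) (g (j+1))) (f := fun v => f (g j) - f v) (C := ε')
      (hνfin _ _) ?_
    · rw [Real.norm_eq_abs] at this
      calc |∫ v in Set.Ioc (g j) (g (j+1)), (f (g j) - f v) ∂ν|
          ≤ ε' * (ν (Set.Ioc (g j) (g (j+1)))).toReal := this
        _ = ε' * (q (g (j+1)) - q (g j)) := by rw [hνIoc _ _ hjj]
    · intro v hv
      have hvmem : v ∈ Set.Icc (0:ℝ) T :=
        ⟨le_trans h0j hv.1.le, le_trans hv.2 (hgT (j+1) hj1m).2⟩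
      have hd : dist (g j) v < δ := by
        rw [Real.dist_eq, abs_sub_lt_iff]
        have h1 : v ≤ g (j+1) := hv.2
        have h2 : g j < v := hv.1
        rw [hgstep j] at h1
        constructor <;> nlinarith
      have := hδ (g j) (hgT j hjm) v hvmem hd
      rw [Real.dist_eq, Real.norm_eq_abs] at *
      exact this.le
  have hc : |B - ∫ v in Set.Ioc 0 t, f v ∂ν| ≤ ε' * q t := by
    have hint : ∫ v in Set.Ioc 0 t, f v ∂ν
        = ∑ i ∈ Finset.range m, ∫ v in Set.Ioc (g i) (g (i+1)), f v ∂ν := by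
      rw [← hgm]; exact hsplit m le_rfl
    rw [hint, hBdef, ← Finset.sum_sub_distrib]
    calc |∑ j ∈ Finset.range m, (f (g j) * (q (g (j+1)) - q (g j))
            - ∫ v in Set.Ioc (g j) (g (j+1)), f v ∂ν)|
        ≤ ∑ j ∈ Finset.range m, |f (g j) * (q (g (j+1)) - q (g j))
            - ∫ v in Set.Ioc (g j) (g (j+1)), f v ∂ν| := Finset.abs_sum_le_sum_abs _ _
      _ ≤ ∑ j ∈ Finset.range m, ε' * (q (g (j+1)) - q (g j)) := by
          apply Finset.sum_le_sum
          intro j hj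
          exact hper j (Finset.mem_range.1 hj)
      _ = ε' * q t := by
          rw [← Finset.mul_sum, Finset.sum_range_sub (fun j => q (g j)), hg0, hgm, hq0,
            sub_zero]
  -- the index of the grid interval containing v
  set J : ℝ → ℕ := fun v => (⌈v * m / t⌉).toNat - 1 with hJdef
  have hJ : ∀ v : ℝ, 0 < v → v ≤ t → J v < m ∧ g (J v) < v ∧ v ≤ g (J v + 1) := by
    intro v hv0 hvt
    have hpos : 0 < v * m / t := by positivity
    have hc1 : 1 ≤ ⌈v * m / t⌉ := Int.ceil_pos.2 hpos
    have hcm : ⌈v * m / t⌉ ≤ (m:ℤ) := by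
      apply Int.ceil_le.2
      push_cast
      rw [div_le_iff₀ ht0]
      nlinarith
    have hJc : ((J v : ℕ) : ℝ) = (⌈v * m / t⌉ : ℝ) - 1 := by
      simp only [hJdef]
      have : ((⌈v * m / t⌉.toNat - 1 : ℕ) : ℤ) = ⌈v * m / t⌉ - 1 := by omega
      exact_mod_cast congrArg (fun z : ℤ => (z : ℝ)) this
    have hJc1 : ((J v + 1 : ℕ) : ℝ) = (⌈v * m / t⌉ : ℝ) := by
      push_cast [hJc]; ring
    refine ⟨?_, ?_, ?_⟩
    · simp only [hJdef]; omega
    · show (J v : ℝ) * t / m < v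
      rw [div_lt_iff₀ hm0, hJc]
      have h1 : (⌈v * m / t⌉ : ℝ) < v * m / t + 1 := Int.ceil_lt_add_one _
      rw [div_add' _ _ _ (ne_of_gt ht0), lt_div_iff₀ ht0] at h1
      nlinarith
    · show v ≤ ((J v + 1 : ℕ) : ℝ) * t / m
      rw [le_div_iff₀ hm0, hJc1]
      have h2 : v * m / t ≤ (⌈v * m / t⌉ : ℝ) := Int.le_ceil _
      rw [div_le_iff₀ ht0] at h2
      nlinarith
  -- eventualities
  obtain ⟨n₀, hn₀⟩ := hmesh (δ/2) (by positivity)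
  have ev1 : ∀ᶠ n in atTop, ∀ k : Fin (N n), π n k.succ - π n k.castSucc < δ/2 :=
    eventually_atTop.2 ⟨n₀, hn₀⟩
  have hBn : Tendsto (fun n => ∑ j ∈ Finset.range m,
      f (g j) * (Q n (g (j+1)) - Q n (g j))) atTop (nhds B) := by
    rw [hBdef]
    apply tendsto_finset_sum
    intro j hj
    have hjm := Finset.mem_range.1 hj
    exact ((hqv (g (j+1)) (hgT (j+1) hjm)).sub (hqv (g j) (hgT j hjm.le))).const_mul _
  have ev2 : ∀ᶠ n in atTop, dist (∑ j ∈ Finset.range m,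
      f (g j) * (Q n (g (j+1)) - Q n (g j))) B < ε/2 :=
    Metric.tendsto_nhds.1 hBn (ε/2) (by positivity)
  have ev3 : ∀ᶠ n in atTop, Q n t < q t + 1 := by
    have := Metric.tendsto_nhds.1 (hqv t ⟨ht0.le, htT⟩) 1 one_pos
    filter_upwards [this] with n hn
    rw [Real.dist_eq, abs_sub_lt_iff] at hn
    linarith [hn.1]
  filter_upwards [ev1, ev2, ev3] with n h1 h2 h3
  -- notation
  set dx : Fin (N n) → ℝ := fun k => x (π n k.succ) - x (π n k.castSucc) with hdx
  have hdx2 : ∀ k, (0:ℝ) ≤ dx k ^ 2 := fun k => sq_nonneg _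
  have hQmt : ∀ r, Q n r = ∑ k : Fin (N n), if π n k.succ ≤ r then dx k ^ 2 else 0 :=
    fun r => rfl
  have hQnt0 : 0 ≤ Q n t := by
    rw [hQmt]
    apply Finset.sum_nonneg
    intro k _
    by_cases hh : π n k.succ ≤ t
    · rw [if_pos hh]; exact sq_nonneg _
    · rw [if_neg hh]
  have hv0 : ∀ k : Fin (N n), 0 < π n k.succ := by
    intro k
    rw [← hπ0 n]
    exact hπ_mono n (Fin.succ_pos k)
  -- rewrite Bn n as a sum over k
  have hBneq : ∑ j ∈ Finset.range m, f (g j) * (Q n (g (j+1)) - Q n (g j))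
      = ∑ k : Fin (N n), if π n k.succ ≤ t then f (g (J (π n k.succ))) * dx k ^ 2 else 0 := by
    have step1 : ∀ j, f (g j) * (Q n (g (j+1)) - Q n (g j))
        = ∑ k : Fin (N n), if g j < π n k.succ ∧ π n k.succ ≤ g (j+1)
            then f (g j) * dx k ^ 2 else 0 := by
      intro j
      rw [hQmt, hQmt, ← Finset.sum_sub_distrib, Finset.mul_sum]
      apply Finset.sum_congr rfl
      intro k _
      by_cases hh1 : π n k.succ ≤ g j
      · rw [if_pos hh1, if_pos (le_trans hh1 (hgmono (Nat.le_succ j))),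
          if_neg (by rintro ⟨hh, _⟩; exact absurd hh1 (not_le.2 hh))]
        ring
      · by_cases hh2 : π n k.succ ≤ g (j+1)
        · rw [if_pos hh2, if_neg hh1, if_pos ⟨not_le.1 hh1, hh2⟩]; ring
        · rw [if_neg hh2, if_neg hh1, if_neg (by rintro ⟨_, hh⟩; exact hh2 hh)]; ring
    calc ∑ j ∈ Finset.range m, f (g j) * (Q n (g (j+1)) - Q n (g j))
        = ∑ j ∈ Finset.range m, ∑ k : Fin (N n),
            if g j < π n k.succ ∧ π n k.succ ≤ g (j+1) then f (g j) * dx k ^ 2 else 0 := by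
          exact Finset.sum_congr rfl fun j _ => step1 j
      _ = ∑ k : Fin (N n), ∑ j ∈ Finset.range m,
            if g j < π n k.succ ∧ π n k.succ ≤ g (j+1) then f (g j) * dx k ^ 2 else 0 :=
          Finset.sum_comm
      _ = ∑ k : Fin (N n), if π n k.succ ≤ t then f (g (J (π n k.succ))) * dx k ^ 2 else 0 := by
          apply Finset.sum_congr rfl
          intro k _
          by_cases hvt : π n k.succ ≤ t
          · obtain ⟨hJm, hJl, hJr⟩ := hJ (π n k.succ) (hv0 k) hvt
            have hcongr : ∀ j ∈ Finset.range m,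
                (if g j < π n k.succ ∧ π n k.succ ≤ g (j+1) then f (g j) * dx k ^ 2 else 0)
                = if j = J (π n k.succ) then f (g (J (π n k.succ))) * dx k ^ 2 else 0 := by
              intro j _
              rcases lt_trichotomy j (J (π n k.succ)) with hlt | heq | hgt
              · have hne : ¬ (g j < π n k.succ ∧ π n k.succ ≤ g (j+1)) := by
                  rintro ⟨-, hh⟩
                  have hgg : g (j+1) ≤ g (J (π n k.succ)) := hgmono hlt
                  linarith
                rw [if_neg hne, if_neg (Nat.ne_of_lt hlt)]
              · subst heq
                rw [if_pos ⟨hJl, hJr⟩, if_pos rfl]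
              · have hne : ¬ (g j < π n k.succ ∧ π n k.succ ≤ g (j+1)) := by
                  rintro ⟨hh, -⟩
                  have hgg : g (J (π n k.succ) + 1) ≤ g j := hgmono hgt
                  linarith
                rw [if_neg hne, if_neg (Nat.ne_of_gt hgt)]
            rw [Finset.sum_congr rfl hcongr,
              Finset.sum_ite_eq' (Finset.range m) (J (π n k.succ))
                (fun _ => f (g (J (π n k.succ))) * dx k ^ 2),
              if_pos (Finset.mem_range.2 hJm), if_pos hvt]
          · rw [if_neg hvt]
            apply Finset.sum_eq_zero
            intro j hj
            apply if_neg
            rintro ⟨_, hh2⟩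
            have : g (j+1) ≤ t := hgm ▸ hgmono (Finset.mem_range.1 hj)
            exact hvt (le_trans hh2 this)
  -- step (a)
  have ha : |(∑ k : Fin (N n), if π n k.succ ≤ t then f (π n k.castSucc) * dx k ^ 2 else 0)
      - ∑ j ∈ Finset.range m, f (g j) * (Q n (g (j+1)) - Q n (g j))| ≤ ε' * Q n t := by
    rw [hBneq, ← Finset.sum_sub_distrib]
    calc |∑ k : Fin (N n), ((if π n k.succ ≤ t then f (π n k.castSucc) * dx k ^ 2 else 0)
            - (if π n k.succ ≤ t then f (g (J (π n k.succ))) * dx k ^ 2 else 0))|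
        ≤ ∑ k : Fin (N n), |(if π n k.succ ≤ t then f (π n k.castSucc) * dx k ^ 2 else 0)
            - (if π n k.succ ≤ t then f (g (J (π n k.succ))) * dx k ^ 2 else 0)| :=
          Finset.abs_sum_le_sum_abs _ _
      _ ≤ ∑ k : Fin (N n), (if π n k.succ ≤ t then ε' * dx k ^ 2 else 0) := by
          apply Finset.sum_le_sum
          intro k _
          by_cases hvt : π n k.succ ≤ t
          · rw [if_pos hvt, if_pos hvt, if_pos hvt, ← sub_mul, abs_mul, abs_pow, sq_abs]
            apply mul_le_mul_of_nonneg_right _ (hdx2 k)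
            obtain ⟨hJm, hJl, hJr⟩ := hJ (π n k.succ) (hv0 k) hvt
            have hb1 : π n k.castSucc < π n k.succ := hπ_mono n (Fin.castSucc_lt_succ (i := k))
            have hb2 : π n k.succ - π n k.castSucc < δ/2 := h1 k
            have hb3 : g (J (π n k.succ)) + t/m = g (J (π n k.succ) + 1) := (hgstep _).symm
            have hdist : dist (π n k.castSucc) (g (J (π n k.succ))) < δ := by
              rw [Real.dist_eq, abs_sub_lt_iff]
              constructor <;> nlinarith
            have := hδ (π n k.castSucc) (hmem n k.castSucc)
              (g (J (π n k.succ))) (hgT _ hJm.le) hdist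
            rw [Real.dist_eq] at this
            exact this.le
          · rw [if_neg hvt, if_neg hvt, if_neg hvt, sub_zero, abs_zero]
      _ = ε' * Q n t := by
          rw [hQmt, Finset.mul_sum]
          apply Finset.sum_congr rfl
          intro k _
          by_cases hvt : π n k.succ ≤ t
          · rw [if_pos hvt, if_pos hvt]
          · rw [if_neg hvt, if_neg hvt, mul_zero]
  -- conclude
  rw [Real.dist_eq]
  have hdist2 : |(∑ j ∈ Finset.range m, f (g j) * (Q n (g (j+1)) - Q n (g j))) - B| < ε/2 := by
    rw [← Real.dist_eq]; exact h2
  have t1 : |(∑ k : Fin (N n), if π n k.succ ≤ t then f (π n k.castSucc) * dx k ^ 2 else 0)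
      - ∫ v in Set.Ioc 0 t, f v ∂ν|
      ≤ |(∑ k : Fin (N n), if π n k.succ ≤ t then f (π n k.castSucc) * dx k ^ 2 else 0) - B|
        + |B - ∫ v in Set.Ioc 0 t, f v ∂ν| := abs_sub_le _ _ _
  have t2 : |(∑ k : Fin (N n), if π n k.succ ≤ t then f (π n k.castSucc) * dx k ^ 2 else 0) - B|
      ≤ |(∑ k : Fin (N n), if π n k.succ ≤ t then f (π n k.castSucc) * dx k ^ 2 else 0)
          - ∑ j ∈ Finset.range m, f (g j) * (Q n (g (j+1)) - Q n (g j))|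
        + |(∑ j ∈ Finset.range m, f (g j) * (Q n (g (j+1)) - Q n (g j))) - B| := abs_sub_le _ _ _
  have hQle : Q n t ≤ q t + 1 := h3.le
  have harith : ε' * Q n t + ε/2 + ε' * q t < ε := by
    have hε'2 : ε' * (2 * q T + 2) = ε / 2 := by
      rw [hε'def]; field_simp
    nlinarith [mul_le_mul_of_nonneg_left hQle hε'.le, hε'.le, hqtT, hqt0]
  linarith [ha, hc, t1, t2, hdist2]

set_option maxHeartbeats 2000000 in
/-- Quadratic variation of the geometric price path: if a continuous path `x` has quadratic
variation `q` (continuous, nondecreasing, `q 0 = 0`) along a fixed refining sequence of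
partitions of `[0,T]`, `h` is continuous with bounded variation, `s₀ > 0` and
`s(t) = s₀ exp(h(t) + x(t))`, then along the same partitions
`Σ_{t_k ≤ t} (s(t_k) − s(t_{k-1}))² → ∫_{(0,t]} s(u)² dq(u)` for every `t ∈ [0,T]`. -/
theorem stmt_6
    (T : ℝ) (hT : 0 < T)
    (x : ℝ → ℝ) (hx_cont : ContinuousOn x (Set.Icc 0 T))
    (N : ℕ → ℕ) (π : (n : ℕ) → Fin (N n + 1) → ℝ)
    (hπ_mono : ∀ n, StrictMono (π n))
    (hπ0 : ∀ n, π n 0 = 0)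
    (hπ_last : ∀ n, π n (Fin.last (N n)) = T)
    (hmesh : ∀ ε > 0, ∃ n₀ : ℕ, ∀ n ≥ n₀, ∀ k : Fin (N n),
      π n k.succ - π n k.castSucc < ε)
    (q : ℝ → ℝ) (hq_mono : Monotone q) (hq_cont : Continuous q) (hq0 : q 0 = 0)
    (ν : Measure ℝ)
    (hν : ν = StieltjesFunction.measure
      ⟨q, hq_mono, fun y => hq_cont.continuousAt.continuousWithinAt⟩)
    (hqv : ∀ t ∈ Set.Icc 0 T,
      Tendsto
        (fun n => ∑ k : Fin (N n),
          if π n k.succ ≤ t then (x (π n k.succ) - x (π n k.castSucc)) ^ 2 else 0)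
        atTop (nhds (q t)))
    (h : ℝ → ℝ) (hh_cont : ContinuousOn h (Set.Icc 0 T))
    (hh_bv : BoundedVariationOn h (Set.Icc 0 T))
    (s₀ : ℝ) (hs₀ : 0 < s₀)
    (s : ℝ → ℝ) (hs : ∀ u, s u = s₀ * Real.exp (h u + x u)) :
    ∀ t ∈ Set.Icc 0 T,
      Tendsto
        (fun n => ∑ k : Fin (N n),
          if π n k.succ ≤ t then (s (π n k.succ) - s (π n k.castSucc)) ^ 2 else 0)
        atTop (nhds (∫ u in Set.Ioc 0 t, (s u) ^ 2 ∂ν)) := by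
  intro t ht
  have hv0 : ∀ n (k : Fin (N n)), 0 < π n k.succ := by
    intro n k
    rw [← hπ0 n]
    exact hπ_mono n (Fin.succ_pos k)
  rcases ht.1.eq_or_lt with heq | ht0
  · -- t = 0
    subst heq
    have hz : ∀ n, (∑ k : Fin (N n),
        if π n k.succ ≤ (0:ℝ) then (s (π n k.succ) - s (π n k.castSucc)) ^ 2 else 0) = 0 := by
      intro n
      apply Finset.sum_eq_zero
      intro k _
      exact if_neg (not_le.2 (hv0 n k))
    have hint : (∫ u in Set.Ioc (0:ℝ) 0, (s u) ^ 2 ∂ν) = 0 := by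
      rw [Set.Ioc_self]
      simp
    rw [hint]
    simp only [hz]
    exact tendsto_const_nhds
  · -- t > 0
    have htT := ht.2
    have hmem : ∀ n (k : Fin (N n + 1)), π n k ∈ Set.Icc (0:ℝ) T := fun n k =>
      ⟨(hπ0 n) ▸ (hπ_mono n).monotone (Fin.zero_le k),
       (hπ_last n) ▸ (hπ_mono n).monotone (Fin.le_last k)⟩
    have hs_cont : ContinuousOn s (Set.Icc 0 T) := by
      have hc : ContinuousOn (fun u => s₀ * Real.exp (h u + x u)) (Set.Icc 0 T) :=
        continuousOn_const.mul (Real.continuous_exp.comp_continuousOn (hh_cont.add hx_cont))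
      exact hc.congr fun u _ => hs u
    have hf_cont : ContinuousOn (fun u => (s u)^2) (Set.Icc 0 T) := hs_cont.pow 2
    have hF := main_aux T t ht0 htT x N π hπ_mono hπ0 hπ_last hmesh q hq_mono hq_cont hq0
      ν hν hqv (fun u => (s u)^2) hf_cont
    -- squeeze: difference tends to 0
    have hqT0 : (0:ℝ) ≤ q T := by rw [← hq0]; exact hq_mono hT.le
    obtain ⟨M, hM⟩ := isCompact_Icc.exists_bound_of_continuousOn hs_cont
    have hM0 : 0 ≤ M := le_trans (norm_nonneg _) (hM 0 ⟨le_rfl, hT.le⟩)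
    set V : ℝ := (eVariationOn h (Set.Icc 0 T)).toReal with hVdef
    have hV0 : 0 ≤ V := ENNReal.toReal_nonneg
    have hdiff : Tendsto (fun n =>
        (∑ k : Fin (N n),
          if π n k.succ ≤ t then (s (π n k.succ) - s (π n k.castSucc)) ^ 2 else 0)
        - (∑ k : Fin (N n),
          if π n k.succ ≤ t then (s (π n k.castSucc))^2 * (x (π n k.succ) - x (π n k.castSucc)) ^ 2 else 0))
        atTop (nhds 0) := by
      rw [Metric.tendsto_nhds]
      intro ε hε
      set D : ℝ := M^2*(15*V + 12*(q T + 1)) with hDdef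
      have hD0 : 0 ≤ D := by
        have h1 : (0:ℝ) ≤ 15*V + 12*(q T + 1) := by nlinarith
        exact mul_nonneg (sq_nonneg M) h1
      set η : ℝ := min (ε / (D + 1)) (1/2) with hηdef
      have hη0 : 0 < η := lt_min (div_pos hε (by linarith)) one_half_pos
      have hη12 : η ≤ 1/2 := min_le_right _ _
      obtain ⟨δx, hδx0, hδx⟩ := Metric.uniformContinuousOn_iff.1
        (isCompact_Icc.uniformContinuousOn_of_continuous hx_cont) η hη0
      obtain ⟨δh, hδh0, hδh⟩ := Metric.uniformContinuousOn_iff.1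
        (isCompact_Icc.uniformContinuousOn_of_continuous hh_cont) η hη0
      obtain ⟨n₀, hn₀⟩ := hmesh (min δx δh) (lt_min hδx0 hδh0)
      have ev1 : ∀ᶠ n in atTop, ∀ k : Fin (N n),
          π n k.succ - π n k.castSucc < min δx δh := eventually_atTop.2 ⟨n₀, hn₀⟩
      have ev2 : ∀ᶠ n in atTop, (∑ k : Fin (N n),
          if π n k.succ ≤ T then (x (π n k.succ) - x (π n k.castSucc)) ^ 2 else 0) < q T + 1 := by
        have := Metric.tendsto_nhds.1 (hqv T ⟨hT.le, le_rfl⟩) 1 one_pos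
        filter_upwards [this] with n hn
        rw [Real.dist_eq, abs_sub_lt_iff] at hn
        linarith [hn.1]
      filter_upwards [ev1, ev2] with n h1 h2
      rw [Real.dist_eq, sub_zero, ← Finset.sum_sub_distrib]
      have hQT : (∑ k : Fin (N n),
          if π n k.succ ≤ T then (x (π n k.succ) - x (π n k.castSucc)) ^ 2 else 0)
          = ∑ k : Fin (N n), (x (π n k.succ) - x (π n k.castSucc)) ^ 2 := by
        apply Finset.sum_congr rfl
        intro k _
        exact if_pos ((hmem n k.succ).2)
      have hsumdx : ∑ k : Fin (N n), (x (π n k.succ) - x (π n k.castSucc)) ^ 2 ≤ q T + 1 := by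
        rw [← hQT]; exact h2.le
      have hsumdh : ∑ k : Fin (N n), |h (π n k.succ) - h (π n k.castSucc)| ≤ V :=
        var_sum hh_bv (π n) (hπ_mono n).monotone (hmem n)
      -- termwise estimate
      have hterm : ∀ k : Fin (N n),
          |(if π n k.succ ≤ t then (s (π n k.succ) - s (π n k.castSucc)) ^ 2 else 0)
            - (if π n k.succ ≤ t then (s (π n k.castSucc))^2 * (x (π n k.succ) - x (π n k.castSucc)) ^ 2 else 0)|
          ≤ M^2 * (15*η*|h (π n k.succ) - h (π n k.castSucc)|
              + 12*η*(x (π n k.succ) - x (π n k.castSucc))^2) := by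
        intro k
        have hbound_nonneg : 0 ≤ M^2 * (15*η*|h (π n k.succ) - h (π n k.castSucc)|
            + 12*η*(x (π n k.succ) - x (π n k.castSucc))^2) := by positivity
        by_cases hvt : π n k.succ ≤ t
        · rw [if_pos hvt, if_pos hvt]
          set a := π n k.castSucc with hadef
          set b := π n k.succ with hbdef
          have hab : a < b := hπ_mono n (Fin.castSucc_lt_succ (i := k))
          have hmesh_k := h1 k
          have hamem := hmem n k.castSucc
          have hbmem := hmem n k.succ
          have hdxk : |x b - x a| ≤ η := by
            have hd : dist b a < δx := by
              rw [Real.dist_eq, abs_sub_lt_iff]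
              constructor <;>
                [exact lt_of_lt_of_le hmesh_k (min_le_left _ _); linarith [lt_of_lt_of_le hmesh_k (min_le_left _ _), hab]]
            have := hδx b hbmem a hamem hd
            rw [Real.dist_eq] at this
            exact this.le
          have hdhk : |h b - h a| ≤ η := by
            have hd : dist b a < δh := by
              rw [Real.dist_eq, abs_sub_lt_iff]
              constructor <;>
                [exact lt_of_lt_of_le hmesh_k (min_le_right _ _); linarith [lt_of_lt_of_le hmesh_k (min_le_right _ _), hab]]
            have := hδh b hbmem a hamem hd
            rw [Real.dist_eq] at this
            exact this.le
          have hexp : Real.exp (h b + x b) = Real.exp (h a + x a)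
              * Real.exp ((h b + x b) - (h a + x a)) := by
            rw [← Real.exp_add]; ring_nf
          have key : s b - s a = s a * (Real.exp ((h b + x b) - (h a + x a)) - 1) := by
            rw [hs a, hs b, hexp]; ring
          have hsa : |s a| ≤ M := by
            have := hM a hamem
            rwa [Real.norm_eq_abs] at this
          have hcore := core_est (y := (h b + x b) - (h a + x a)) (z := x b - x a)
            (w := h b - h a) hη12 hη0.le hdhk hdxk (by ring)
          calc |(s b - s a)^2 - (s a)^2 * (x b - x a)^2|
              = (s a)^2 * |(Real.exp ((h b + x b) - (h a + x a)) - 1)^2 - (x b - x a)^2| := by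
                rw [key]
                rw [show (s a * (Real.exp ((h b + x b) - (h a + x a)) - 1))^2
                  - (s a)^2 * (x b - x a)^2
                  = (s a)^2 * ((Real.exp ((h b + x b) - (h a + x a)) - 1)^2 - (x b - x a)^2)
                  from by ring]
                rw [abs_mul, abs_of_nonneg (sq_nonneg (s a))]
            _ ≤ (s a)^2 * (15*η*|h b - h a| + 12*η*(x b - x a)^2) := by
                apply mul_le_mul_of_nonneg_left hcore (sq_nonneg _)
            _ ≤ M^2 * (15*η*|h b - h a| + 12*η*(x b - x a)^2) := by
                apply mul_le_mul_of_nonneg_right _ (by positivity)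
                rw [← sq_abs (s a)]
                exact pow_le_pow_left₀ (abs_nonneg _) hsa 2
        · rw [if_neg hvt, if_neg hvt, sub_zero, abs_zero]
          exact hbound_nonneg
      calc |∑ k : Fin (N n),
            ((if π n k.succ ≤ t then (s (π n k.succ) - s (π n k.castSucc)) ^ 2 else 0)
            - (if π n k.succ ≤ t then (s (π n k.castSucc))^2 * (x (π n k.succ) - x (π n k.castSucc)) ^ 2 else 0))|
          ≤ ∑ k : Fin (N n),
            |(if π n k.succ ≤ t then (s (π n k.succ) - s (π n k.castSucc)) ^ 2 else 0)
            - (if π n k.succ ≤ t then (s (π n k.castSucc))^2 * (x (π n k.succ) - x (π n k.castSucc)) ^ 2 else 0)| :=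
            Finset.abs_sum_le_sum_abs _ _
        _ ≤ ∑ k : Fin (N n), M^2 * (15*η*|h (π n k.succ) - h (π n k.castSucc)|
              + 12*η*(x (π n k.succ) - x (π n k.castSucc))^2) :=
            Finset.sum_le_sum fun k _ => hterm k
        _ = M^2*15*η * (∑ k : Fin (N n), |h (π n k.succ) - h (π n k.castSucc)|)
              + M^2*12*η * (∑ k : Fin (N n), (x (π n k.succ) - x (π n k.castSucc))^2) := by
            rw [Finset.mul_sum, Finset.mul_sum, ← Finset.sum_add_distrib]
            apply Finset.sum_congr rfl
            intro k _
            ring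
        _ ≤ M^2*15*η * V + M^2*12*η * (q T + 1) := by
            have c1 : (0:ℝ) ≤ M^2*15*η := by positivity
            have c2 : (0:ℝ) ≤ M^2*12*η := by positivity
            have := mul_le_mul_of_nonneg_left hsumdh c1
            have := mul_le_mul_of_nonneg_left hsumdx c2
            linarith
        _ = η * D := by rw [hDdef]; ring
        _ < ε := by
            have hle : η ≤ ε / (D + 1) := min_le_left _ _
            have : η * D ≤ (ε / (D + 1)) * D := mul_le_mul_of_nonneg_right hle hD0
            have hlt : (ε / (D + 1)) * D < ε := by
              rw [div_mul_eq_mul_div, div_lt_iff₀ (by linarith : (0:ℝ) < D + 1)]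
              nlinarith
            linarith
    have hcomb := hF.add hdiff
    rw [add_zero] at hcomb
    have heqfun : (fun n =>
        (∑ k : Fin (N n),
          if π n k.succ ≤ t then (s (π n k.castSucc))^2 * (x (π n k.succ) - x (π n k.castSucc)) ^ 2 else 0)
        + ((∑ k : Fin (N n),
          if π n k.succ ≤ t then (s (π n k.succ) - s (π n k.castSucc)) ^ 2 else 0)
        - (∑ k : Fin (N n),
          if π n k.succ ≤ t then (s (π n k.castSucc))^2 * (x (π n k.succ) - x (π n k.castSucc)) ^ 2 else 0)))
        = fun n => ∑ k : Fin (N n),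
          if π n k.succ ≤ t then (s (π n k.succ) - s (π n k.castSucc)) ^ 2 else 0 := by
      funext n
      ring
    rw [heqfun] at hcomb
    exact hcomb
end

section
/- Let (Ω, ℱ, P) be a probability space and 𝒢 ⊆ ℱ a sub-σ-algebra. Let k ≥ 0. Let V, Vk, π, S, D be 𝒢-measurable real random variables with S > 0, let S′ and V′ be integrable real random variables, and assume Vk, π·(S′ − S) and S·|D| are integrable. If E[S′ | 𝒢] − S ≠ 0 almost surely, then the conditional-mean hedging condition E[ Vk + π·(S′ − S) − k·S·|D| | 𝒢 ] = E[ V′ | 𝒢 ] (almost surely) holds if and only if, almost surely, π = [ (E[V′|𝒢] − V) + (V − Vk) + k·S·|D| ] / ( E[S′|𝒢] − S ). -/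
open MeasureTheory

/-- Conditional-mean hedging strategy: under the stated measurability and integrability
assumptions, and provided `E[S′|𝒢] − S ≠ 0` a.s., the conditional-mean hedging condition
`E[Vk + π(S′ − S) − k S |D| | 𝒢] = E[V′ | 𝒢]` (a.s.) holds if and only if, almost surely,
`π = ((E[V′|𝒢] − V) + (V − Vk) + k S |D|) / (E[S′|𝒢] − S)`. -/
theorem stmt_12
    (Ω : Type*) [mΩ : MeasurableSpace Ω] (P : Measure Ω) [IsProbabilityMeasure P]
    (𝒢 : MeasurableSpace Ω) (h𝒢 : 𝒢 ≤ mΩ)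
    (k : ℝ) (hk : 0 ≤ k)
    (V Vk π S D : Ω → ℝ)
    (hV : Measurable[𝒢] V) (hVk : Measurable[𝒢] Vk) (hπ : Measurable[𝒢] π)
    (hS : Measurable[𝒢] S) (hD : Measurable[𝒢] D)
    (hS_pos : ∀ ω, 0 < S ω)
    (S' V' : Ω → ℝ) (hS'_int : Integrable S' P) (hV'_int : Integrable V' P)
    (hVk_int : Integrable Vk P)
    (hgain_int : Integrable (fun ω => π ω * (S' ω - S ω)) P)
    (hcost_int : Integrable (fun ω => S ω * |D ω|) P)
    (hdenom : ∀ᵐ ω ∂P, (P[S' | 𝒢]) ω - S ω ≠ 0) :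
    (P[fun ω => Vk ω + π ω * (S' ω - S ω) - k * S ω * |D ω| | 𝒢] =ᵐ[P] P[V' | 𝒢])
      ↔ (π =ᵐ[P] fun ω =>
          (((P[V' | 𝒢]) ω - V ω) + (V ω - Vk ω) + k * S ω * |D ω|)
            / ((P[S' | 𝒢]) ω - S ω)) := by
  -- Pull-out property for the gain term, via truncation (S need not be integrable).
  have hpull : (P[fun ω => π ω * (S' ω - S ω) | 𝒢]) =ᵐ[P]
      fun ω => π ω * ((P[S' | 𝒢]) ω - S ω) := by
    set A : ℕ → Set Ω := fun n => {ω | |π ω| ≤ n ∧ S ω ≤ n} with hA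
    have hAmeas : ∀ n, MeasurableSet[𝒢] (A n) := fun n =>
      (measurableSet_le hπ.abs measurable_const).inter
        (measurableSet_le hS measurable_const)
    have key : ∀ n : ℕ, ∀ᵐ ω ∂P, ω ∈ A n →
        (P[fun ω => π ω * (S' ω - S ω) | 𝒢]) ω = π ω * ((P[S' | 𝒢]) ω - S ω) := by
      intro n
      set f : Ω → ℝ := (A n).indicator π with hf
      have hf_sm : StronglyMeasurable[𝒢] f :=
        (hπ.stronglyMeasurable).indicator (hAmeas n)
      have hf_bdd : ∀ ω, ‖f ω‖ ≤ (n : ℝ) := by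
        intro ω
        by_cases h : ω ∈ A n
        · simp only [hf, Set.indicator_of_mem h, Real.norm_eq_abs]; exact h.1
        · simp [hf, Set.indicator_of_notMem h]
      have hfS'_int : Integrable (fun ω => f ω * S' ω) P :=
        hS'_int.bdd_mul (hf_sm.mono h𝒢).aestronglyMeasurable (Filter.Eventually.of_forall hf_bdd)
      have hfS_bdd : ∀ ω, ‖f ω * S ω‖ ≤ (n : ℝ) * n := by
        intro ω
        by_cases h : ω ∈ A n
        · rw [norm_mul]
          have h1 : ‖f ω‖ ≤ (n : ℝ) := hf_bdd ω
          have h2 : ‖S ω‖ ≤ (n : ℝ) := by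
            rw [Real.norm_eq_abs, abs_of_pos (hS_pos ω)]; exact h.2
          exact mul_le_mul h1 h2 (norm_nonneg _) (Nat.cast_nonneg n)
        · simp only [hf, Set.indicator_of_notMem h, zero_mul, norm_zero]
          positivity
      have hfS_int : Integrable (fun ω => f ω * S ω) P := by
        refine Integrable.mono' (integrable_const ((n : ℝ) * n))
          ((hf_sm.mul hS.stronglyMeasurable).mono h𝒢).aestronglyMeasurable ?_
        exact Filter.Eventually.of_forall hfS_bdd
      -- indicator of gain equals f*S' - f*S
      have heq : (A n).indicator (fun ω => π ω * (S' ω - S ω))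
          = fun ω => f ω * S' ω - f ω * S ω := by
        funext ω
        by_cases h : ω ∈ A n
        · simp only [Set.indicator_of_mem h, hf]; ring
        · simp [Set.indicator_of_notMem h, hf]
      have h1 : (P[(A n).indicator (fun ω => π ω * (S' ω - S ω)) | 𝒢]) =ᵐ[P]
          (A n).indicator (P[fun ω => π ω * (S' ω - S ω) | 𝒢]) :=
        condExp_indicator hgain_int (hAmeas n)
      have h2 : (P[(A n).indicator (fun ω => π ω * (S' ω - S ω)) | 𝒢]) =ᵐ[P]
          fun ω => f ω * (P[S' | 𝒢]) ω - f ω * S ω := by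
        rw [heq]
        have hsub : (P[fun ω => f ω * S' ω - f ω * S ω | 𝒢]) =ᵐ[P]
            (P[fun ω => f ω * S' ω | 𝒢]) - (P[fun ω => f ω * S ω | 𝒢]) :=
          condExp_sub hfS'_int hfS_int 𝒢
        have hmul : (P[fun ω => f ω * S' ω | 𝒢]) =ᵐ[P] fun ω => f ω * (P[S' | 𝒢]) ω :=
          condExp_mul_of_stronglyMeasurable_left hf_sm hfS'_int hS'_int
        have hid : (P[fun ω => f ω * S ω | 𝒢]) = fun ω => f ω * S ω :=
          condExp_of_stronglyMeasurable h𝒢 (hf_sm.mul hS.stronglyMeasurable) hfS_int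
        filter_upwards [hsub, hmul] with ω hω1 hω2
        simp only [Pi.sub_apply] at hω1
        rw [hω1, hω2, hid]
      have h3 : (A n).indicator (P[fun ω => π ω * (S' ω - S ω) | 𝒢]) =ᵐ[P]
          fun ω => f ω * (P[S' | 𝒢]) ω - f ω * S ω := h1.symm.trans h2
      filter_upwards [h3] with ω hω hmem
      have : (A n).indicator (P[fun ω => π ω * (S' ω - S ω) | 𝒢]) ω
          = (P[fun ω => π ω * (S' ω - S ω) | 𝒢]) ω := Set.indicator_of_mem hmem _
      rw [← this, hω, hf, Set.indicator_of_mem hmem]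
      ring
    have hall : ∀ᵐ ω ∂P, ∀ n : ℕ, ω ∈ A n →
        (P[fun ω => π ω * (S' ω - S ω) | 𝒢]) ω = π ω * ((P[S' | 𝒢]) ω - S ω) :=
      ae_all_iff.mpr key
    filter_upwards [hall] with ω hω
    obtain ⟨n, hn⟩ := exists_nat_ge (max (|π ω|) (S ω))
    exact hω n ⟨le_trans (le_max_left _ _) hn, le_trans (le_max_right _ _) hn⟩
  -- Compute the conditional expectation of the hedged value.
  have hcond : (P[fun ω => Vk ω + π ω * (S' ω - S ω) - k * S ω * |D ω| | 𝒢]) =ᵐ[P]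
      fun ω => Vk ω + π ω * ((P[S' | 𝒢]) ω - S ω) - k * S ω * |D ω| := by
    have e1 : (fun ω => Vk ω + π ω * (S' ω - S ω) - k * S ω * |D ω|)
        = ((Vk + fun ω => π ω * (S' ω - S ω)) - k • fun ω => S ω * |D ω|) := by
      funext ω
      simp only [Pi.sub_apply, Pi.add_apply, Pi.smul_apply, smul_eq_mul]
      ring
    rw [e1]
    have hsub := condExp_sub (μ := P) (m := 𝒢)
      (hVk_int.add hgain_int) (hcost_int.smul k)
    have hadd := condExp_add (μ := P) (m := 𝒢) hVk_int hgain_int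
    have hVkid : (P[Vk | 𝒢]) = Vk :=
      condExp_of_stronglyMeasurable h𝒢 hVk.stronglyMeasurable hVk_int
    have hsm : (P[k • fun ω => S ω * |D ω| | 𝒢]) =ᵐ[P]
        k • (P[fun ω => S ω * |D ω| | 𝒢]) :=
      condExp_smul k _ _
    have hcostid : (P[fun ω => S ω * |D ω| | 𝒢]) = fun ω => S ω * |D ω| :=
      condExp_of_stronglyMeasurable h𝒢 (hS.mul hD.abs).stronglyMeasurable hcost_int
    filter_upwards [hsub, hadd, hpull, hsm] with ω h1 h2 h3 h4
    simp only [Pi.sub_apply, Pi.add_apply, Pi.smul_apply, smul_eq_mul] at h1 h2 h4 ⊢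
    rw [h1, h2, h3, h4, hVkid, hcostid]
    ring
  -- Now the algebraic equivalence.
  constructor
  · intro h
    have h' := hcond.symm.trans h
    filter_upwards [h', hdenom] with ω h1 h2
    rw [eq_div_iff h2]
    have : Vk ω + π ω * ((P[S' | 𝒢]) ω - S ω) - k * S ω * |D ω| = (P[V' | 𝒢]) ω := h1
    linarith
  · intro h
    refine hcond.trans ?_
    filter_upwards [h, hdenom] with ω h1 h2
    rw [h1, div_mul_cancel₀ _ h2]
    ring
end
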